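/- Let g : ℝ → Matrix (Fin n) (Fin n) ℝ be such that g'(σ)·(R/(π t)) ≥ (π/R)·id/(t−1)² in the sense of symmetric matrices, where t = e^{πσ/R} and σ > 0. Then 1/det(g'(σ)) ≤ (R²/π²)ⁿ (e^{σπ/R} + e^{−σπ/R} − 2)ⁿ. -/

import Mathlib

open Matrix Real

/-!
Rescaling the hypothesis by `π t / R` says `g'(σ) ≥ λ • 1` in the Loewner order, with
`λ = π² t / (R² (t - 1)²) > 0`. Every eigenvalue of the symmetric matrix `g'(σ)` is then at least
`λ`, so `det g'(σ) ≥ λⁿ`, and `1 / λ = (R² / π²) (t + t⁻¹ - 2)`.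
-/

namespace Matrix

open scoped ComplexOrder

variable {𝕜 n : Type*} [RCLike 𝕜] [Fintype n] [DecidableEq n]

lemma IsHermitian.le_eigenvalues_of_posSemidef_sub_smul_one {A : Matrix n n 𝕜}
    (hA : A.IsHermitian) {c : ℝ} (h : (A - (c : 𝕜) • 1).PosSemidef) (i : n) :
    c ≤ hA.eigenvalues i := by
  set v : n → 𝕜 := ⇑(hA.eigenvectorBasis i)
  have hv : star v ⬝ᵥ v = 1 := by
    rw [dotProduct_comm, ← EuclideanSpace.inner_eq_star_dotProduct, inner_self_eq_norm_sq_to_K,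
      hA.eigenvectorBasis.orthonormal.1 i]
    simp
  have hq := (RCLike.nonneg_iff.mp (h.dotProduct_mulVec_nonneg v)).1
  rw [sub_mulVec, smul_mulVec, one_mulVec, dotProduct_sub, dotProduct_smul, hv, map_sub,
    smul_eq_mul, mul_one, RCLike.ofReal_re, ← hA.eigenvalues_eq] at hq
  linarith

lemma pow_card_le_det_of_posSemidef_sub_smul_one {A : Matrix n n 𝕜} {c : ℝ} (hc : 0 ≤ c)
    (h : (A - (c : 𝕜) • 1).PosSemidef) : (c : 𝕜) ^ Fintype.card n ≤ A.det := by
  have hA : A.IsHermitian := by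
    simpa using h.isHermitian.add (isHermitian_one.smul (RCLike.conj_ofReal (K := 𝕜) c))
  rw [hA.det_eq_prod_eigenvalues, ← RCLike.ofReal_pow, ← RCLike.ofReal_prod,
    RCLike.ofReal_le_ofReal, ← Finset.card_univ, ← Finset.prod_const]
  exact Finset.prod_le_prod (fun _ _ ↦ hc) fun i _ ↦
    hA.le_eigenvalues_of_posSemidef_sub_smul_one h i

end Matrix

lemma div_div_mul_one_div_sub_one_sq {K : Type*} [Field K] {R p t : K} (hR : R ≠ 0)
    (hp : p ≠ 0) (ht : t ≠ 0) (ht₁ : t ≠ 1) :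
    R / (p * t) / (p / R * (1 / (t - 1) ^ 2)) = R ^ 2 / p ^ 2 * (t + t⁻¹ - 2) := by
  have : t - 1 ≠ 0 := sub_ne_zero.2 ht₁
  field_simp
  ring

theorem det_lower_bound_from_herglotz_general (n : ℕ) (R : ℝ) (hR : 0 < R)
    (g' : ℝ → Matrix (Fin n) (Fin n) ℝ) (σ : ℝ) (hσ : 0 < σ)
    (hineq :
      ((R / (π * Real.exp (π * σ / R))) • g' σ -
        ((π / R) * (1 / (Real.exp (π * σ / R) - 1) ^ 2)) •
          (1 : Matrix (Fin n) (Fin n) ℝ)).PosSemidef) :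
    1 / (g' σ).det ≤
      (R ^ 2 / π ^ 2) ^ n * (Real.exp (σ * π / R) + Real.exp (-(σ * π) / R) - 2) ^ n := by
  set t := exp (π * σ / R)
  have ht₁ : 1 < t := one_lt_exp_iff.mpr (by positivity)
  set a := R / (π * t)
  set c := (π / R) * (1 / (t - 1) ^ 2)
  have ha : 0 < a := by positivity
  have hc : 0 < c := by have := sub_pos.2 ht₁; positivity
  have hshift : (g' σ - (c / a) • 1).PosSemidef := by
    convert hineq.smul (inv_nonneg.2 ha.le) using 1
    rw [smul_sub, smul_smul, smul_smul, inv_mul_cancel₀ ha.ne', one_smul, div_eq_inv_mul]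
  have hdet : (c / a) ^ n ≤ (g' σ).det := by
    simpa using pow_card_le_det_of_posSemidef_sub_smul_one (div_pos hc ha).le hshift
  have hexp : exp (σ * π / R) + exp (-(σ * π) / R) = t + t⁻¹ := by
    rw [neg_div, Real.exp_neg, mul_comm σ]
  calc 1 / (g' σ).det ≤ 1 / (c / a) ^ n := one_div_le_one_div_of_le (pow_pos (div_pos hc ha) n) hdet
    _ = (a / c) ^ n := by rw [one_div, ← inv_pow, inv_div]
    _ = _ := by
      rw [hexp, div_div_mul_one_div_sub_one_sq hR.ne' pi_ne_zero (by positivity) ht₁.ne',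
        mul_pow]

/-- If `g'(σ)·(R/(π t)) ≥ (π/R)·id/(t−1)²` in the sense of symmetric matrices, where
`t = e^{πσ/R}` and `σ > 0`, then
`1/det(g'(σ)) ≤ (R²/π²)ⁿ (e^{σπ/R} + e^{−σπ/R} − 2)ⁿ`. -/
theorem det_lower_bound_from_herglotz (n : ℕ) (R : ℝ) (hR : 0 < R)
    (g' : ℝ → Matrix (Fin n) (Fin n) ℝ) (σ : ℝ) (hσ : 0 < σ)
    (hsymm : (g' σ).IsSymm)
    (hineq :
      ((R / (π * Real.exp (π * σ / R))) • g' σ -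
        ((π / R) * (1 / (Real.exp (π * σ / R) - 1) ^ 2)) •
          (1 : Matrix (Fin n) (Fin n) ℝ)).PosSemidef) :
    1 / (g' σ).det ≤
      (R ^ 2 / π ^ 2) ^ n * (Real.exp (σ * π / R) + Real.exp (-(σ * π) / R) - 2) ^ n :=
  det_lower_bound_from_herglotz_general n R hR g' σ hσ hineq
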